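/- Suppose there exists κ > 0 such that dist₂(w, Ω_*) ≤ (f(w) − f_*)/κ for all w ∈ Ω. Let ε > 0, w₀ ∈ Ω, let ε₀ > 0 satisfy f(w₀) − f_* ≤ ε₀ and ε ≤ ε₀, let α > 1, and let the integer t satisfy t ≥ α²G²/κ². Then the RSG iterates satisfy f(w_k) − f_* ≤ ε₀/α^k for every k ≥ 0; in particular, for K = ⌈log_α(ε₀/ε)⌉, f(w_K) − f_* ≤ ε. -/

import Mathlib

open RealInnerProductSpace

noncomputable section

/-- `g` is a subgradient of the convex function `f` at `w`. -/
def IsSubgradAt {d : ℕ} (f : EuclideanSpace ℝ (Fin d) → ℝ)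
    (w g : EuclideanSpace ℝ (Fin d)) : Prop :=
  ∀ u, f w + ⟪g, u - w⟫ ≤ f u

/-- `v` belongs to the normal cone of `Ω` at `w`. -/
def InNormalCone {d : ℕ} (Ω : Set (EuclideanSpace ℝ (Fin d)))
    (w v : EuclideanSpace ℝ (Fin d)) : Prop :=
  ∀ u ∈ Ω, ⟪v, u - w⟫ ≤ 0

/-- `w` is a sequence of stage outputs of the RSG method with parameters
`(w 0, α, ε₀, t)`: within stage `k`, starting from `u k 1 = w (k-1)`, `t` projected
subgradient steps with constant step size `η_k = ε₀/(α^k G²)` are performed and `w k`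
is the average of the `t` iterates of stage `k`. -/
def IsRSGSeq {d : ℕ} (f : EuclideanSpace ℝ (Fin d) → ℝ)
    (Ω : Set (EuclideanSpace ℝ (Fin d))) (G ε₀ α : ℝ) (t : ℕ)
    (w : ℕ → EuclideanSpace ℝ (Fin d)) : Prop :=
  ∃ u g : ℕ → ℕ → EuclideanSpace ℝ (Fin d),
    (∀ k, 1 ≤ k → u k 1 = w (k - 1)) ∧
    (∀ k, 1 ≤ k → ∀ i, 1 ≤ i → i ≤ t →
      IsSubgradAt f (u k i) (g k i) ∧
      u k (i + 1) ∈ Ω ∧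
      ∀ z ∈ Ω, ‖u k (i + 1) - (u k i - (ε₀ / (α ^ k * G ^ 2)) • g k i)‖
        ≤ ‖z - (u k i - (ε₀ / (α ^ k * G ^ 2)) • g k i)‖) ∧
    (∀ k, 1 ≤ k → w k = (t : ℝ)⁻¹ • ∑ i ∈ Finset.Icc 1 t, u k i)



/-- If `v ∈ Ω` minimizes distance to `y` over convex `Ω`, then projection is closer:
for any `z ∈ Ω`, `‖v - z‖ ≤ ‖y - z‖`. -/
lemma proj_closer {d : ℕ} {Ω : Set (EuclideanSpace ℝ (Fin d))} (hΩ : Convex ℝ Ω)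
    {v y z : EuclideanSpace ℝ (Fin d)} (hv : v ∈ Ω)
    (hmin : ∀ u ∈ Ω, ‖v - y‖ ≤ ‖u - y‖) (hz : z ∈ Ω) : ‖v - z‖ ≤ ‖y - z‖ := by
  have hobt : ⟪y - v, z - v⟫ ≤ 0 := by
    by_contra hc
    push_neg at hc
    set c : ℝ := ⟪y - v, z - v⟫ with hcdef
    have hzv : (0:ℝ) < ‖z - v‖ ^ 2 := by
      have hne : z - v ≠ 0 := by
        intro h
        rw [hcdef, h, inner_zero_right] at hc
        exact lt_irrefl 0 hc
      exact pow_pos (norm_pos_iff.mpr hne) 2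
    set s : ℝ := min 1 (c / ‖z - v‖ ^ 2) with hsdef
    have hs0 : 0 < s := lt_min one_pos (by positivity)
    have hs1 : s ≤ 1 := min_le_left _ _
    have hmem : v + s • (z - v) ∈ Ω := by
      have := hΩ hv hz (by linarith : (0:ℝ) ≤ 1 - s) hs0.le (by ring)
      convert this using 1
      module
    have hd := hmin _ hmem
    have hsq : ‖v - y‖ ^ 2 ≤ ‖v + s • (z - v) - y‖ ^ 2 := by
      have := norm_nonneg (v - y); nlinarith [hd]
    have hexp : ‖v + s • (z - v) - y‖ ^ 2
        = ‖v - y‖ ^ 2 - 2 * s * c + s ^ 2 * ‖z - v‖ ^ 2 := by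
      have h1 : v + s • (z - v) - y = (v - y) + s • (z - v) := by module
      rw [h1, norm_add_sq_real, real_inner_smul_right, norm_smul]
      have : ⟪v - y, z - v⟫ = -c := by
        rw [hcdef, ← inner_neg_left]; congr 1; module
      rw [this]
      simp [abs_of_pos hs0]
      ring
    have hsle : s * ‖z - v‖ ^ 2 ≤ c := by
      have : s ≤ c / ‖z - v‖ ^ 2 := min_le_right _ _
      calc s * ‖z - v‖ ^ 2 ≤ (c / ‖z - v‖ ^ 2) * ‖z - v‖ ^ 2 := by nlinarith
        _ = c := by
          have hne : ‖z - v‖ ≠ 0 := fun h => by rw [h] at hzv; norm_num at hzv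
          field_simp
    nlinarith
  have hsq : ‖v - z‖ ^ 2 ≤ ‖y - z‖ ^ 2 := by
    have h1 : y - z = (y - v) - (z - v) := by module
    have hexp : ‖y - z‖ ^ 2 = ‖y - v‖ ^ 2 - 2 * ⟪y - v, z - v⟫ + ‖z - v‖ ^ 2 := by
      rw [h1, norm_sub_sq_real]
    have h2 : ‖v - z‖ = ‖z - v‖ := norm_sub_rev _ _
    rw [h2]
    nlinarith [sq_nonneg ‖y - v‖]
  nlinarith [norm_nonneg (v - z), norm_nonneg (y - z)]

lemma rsg_arith {ε₀ α A G κ D X : ℝ} {t : ℕ}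
    (hε₀ : 0 < ε₀) (hα : 0 < α) (hA : 0 < A) (hG : 0 < G) (hκ : 0 < κ)
    (hD0 : 0 ≤ D) (htR : 0 < (t:ℝ))
    (hfin : 2*(ε₀/(α*A*G^2))*((t:ℝ)*X) ≤ D^2 + t*((ε₀/(α*A*G^2))^2*G^2))
    (hDκ : D*(A*κ) ≤ ε₀) (htκ : α^2*G^2 ≤ (t:ℝ)*κ^2) :
    X ≤ ε₀/(α*A) := by
  have hGne : G ≠ 0 := ne_of_gt hG
  have hαne : α ≠ 0 := ne_of_gt hα
  have hAne : A ≠ 0 := ne_of_gt hA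
  have h1 := mul_le_mul_of_nonneg_right hfin
    (by positivity : (0:ℝ) ≤ (α*A*G^2)*(α*A))
  have e1 : 2*(ε₀/(α*A*G^2))*((t:ℝ)*X) * ((α*A*G^2)*(α*A))
      = 2*ε₀*(t:ℝ)*(X*(α*A)) := by field_simp
  have e2 : (D^2 + (t:ℝ)*((ε₀/(α*A*G^2))^2*G^2)) * ((α*A*G^2)*(α*A))
      = D^2*(α^2*A^2*G^2) + (t:ℝ)*ε₀^2 := by field_simp
  rw [e1, e2] at h1
  have q1 : D^2*(A^2*κ^2) ≤ ε₀^2 := by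
    nlinarith [hDκ, mul_nonneg hD0 (by positivity : (0:ℝ) ≤ A*κ)]
  have key : 2*ε₀*(t:ℝ)*(X*(α*A)) ≤ (2*ε₀*(t:ℝ))*ε₀ := by
    nlinarith [mul_le_mul_of_nonneg_left htκ (by positivity : (0:ℝ) ≤ D^2*A^2),
      mul_le_mul_of_nonneg_left q1 htR.le]
  rw [le_div_iff₀ (by positivity : (0:ℝ) < α*A)]
  exact le_of_mul_le_mul_left (by linarith [key]) (by positivity : (0:ℝ) < 2*ε₀*(t:ℝ))

/-- Telescoping bound for one stage of projected subgradient descent. -/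
lemma stage_bound {d t : ℕ} {Ω : Set (EuclideanSpace ℝ (Fin d))} (hΩ : Convex ℝ Ω)
    {f : EuclideanSpace ℝ (Fin d) → ℝ} {G η : ℝ} (hη : 0 < η)
    (u g : ℕ → EuclideanSpace ℝ (Fin d)) (hu1 : u 1 ∈ Ω)
    (hstep : ∀ i, 1 ≤ i → i ≤ t → IsSubgradAt f (u i) (g i) ∧ u (i+1) ∈ Ω ∧
      ∀ z ∈ Ω, ‖u (i+1) - (u i - η • g i)‖ ≤ ‖z - (u i - η • g i)‖)
    (hGbnd : ∀ z ∈ Ω, ∀ gg, IsSubgradAt f z gg → ‖gg‖ ≤ G)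
    {z : EuclideanSpace ℝ (Fin d)} (hz : z ∈ Ω) :
    ∀ n, n ≤ t → 2*η*(∑ i ∈ Finset.Icc 1 n, (f (u i) - f z)) + ‖u (n+1) - z‖^2
      ≤ ‖u 1 - z‖^2 + n * (η^2 * G^2) := by
  have huΩ : ∀ i, 1 ≤ i → i ≤ t + 1 → u i ∈ Ω := by
    intro i hi1 hit
    rcases Nat.exists_eq_add_of_le hi1 with ⟨j, rfl⟩
    rcases Nat.eq_zero_or_pos j with rfl | hj
    · exact hu1
    · have := (hstep j hj (by omega)).2.1
      simpa [Nat.add_comm] using this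
  intro n
  induction n with
  | zero => intro _; simp
  | succ n ih =>
    intro hn1
    have hn : n ≤ t := by omega
    have hIH := ih hn
    set i := n + 1 with hidef
    obtain ⟨hsg, hmem, hproj⟩ := hstep i (by omega) hn1
    have hui : u i ∈ Ω := huΩ i (by omega) (by omega)
    have h1 : ‖u (i+1) - z‖ ≤ ‖(u i - η • g i) - z‖ :=
      proj_closer hΩ hmem hproj hz
    have hexp : ‖(u i - η • g i) - z‖^2
        = ‖u i - z‖^2 - 2*η*⟪g i, u i - z⟫ + η^2*‖g i‖^2 := by
      have hy : (u i - η • g i) - z = (u i - z) - η • g i := by module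
      rw [hy, norm_sub_sq_real, real_inner_smul_right, real_inner_comm, norm_smul]
      simp [abs_of_pos hη]
      ring
    have hsub : f (u i) - f z ≤ ⟪g i, u i - z⟫ := by
      have := hsg z
      have h2 : ⟪g i, z - u i⟫ = -⟪g i, u i - z⟫ := by
        rw [← inner_neg_right]; congr 1; module
      rw [h2] at this
      linarith
    have hgn : ‖g i‖ ≤ G := hGbnd _ hui _ hsg
    have hkey : ‖u (i+1) - z‖^2 ≤ ‖u i - z‖^2 - 2*η*(f (u i) - f z) + η^2*G^2 := by
      have p1 : ‖u (i+1) - z‖^2 ≤ ‖(u i - η • g i) - z‖^2 :=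
        pow_le_pow_left₀ (norm_nonneg _) h1 2
      have p2 : ‖g i‖^2 ≤ G^2 := pow_le_pow_left₀ (norm_nonneg _) hgn 2
      have p3 : 2*η*(f (u i) - f z) ≤ 2*η*⟪g i, u i - z⟫ :=
        mul_le_mul_of_nonneg_left hsub (by positivity)
      have p4 : η^2*‖g i‖^2 ≤ η^2*G^2 :=
        mul_le_mul_of_nonneg_left p2 (sq_nonneg η)
      linarith
    have hsum : ∑ j ∈ Finset.Icc 1 (n+1), (f (u j) - f z)
        = (∑ j ∈ Finset.Icc 1 n, (f (u j) - f z)) + (f (u (n+1)) - f z) := by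
      rw [Finset.sum_Icc_succ_top (by omega : 1 ≤ n + 1)]
    rw [hsum]
    push_cast
    have hi' : ((i:ℕ):ℝ) = (n:ℝ) + 1 := by rw [hidef]; push_cast; ring
    have hfi : f (u (n+1)) = f (u i) := rfl
    rw [hi', hfi]
    nlinarith [hIH, hkey]

/-- linear convergence of RSG under the (global) polyhedral error bound
`dist₂(w, Ω_*) ≤ (f w − f_*)/κ` on `Ω`: if `t ≥ α²G²/κ²` then
`f(w_k) − f_* ≤ ε₀/α^k` for all `k`, and for `K = ⌈log_α(ε₀/ε)⌉` one has
`f(w_K) − f_* ≤ ε`. -/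
theorem stmt_8 {d : ℕ} (f : EuclideanSpace ℝ (Fin d) → ℝ)
    (Ω : Set (EuclideanSpace ℝ (Fin d)))
    (hΩne : Ω.Nonempty) (hΩcl : IsClosed Ω) (hΩcvx : Convex ℝ Ω)
    (hf : ConvexOn ℝ Set.univ f)
    (fstar : ℝ) (hmin : ∀ z ∈ Ω, fstar ≤ f z)
    (hOs_ne : {z ∈ Ω | f z = fstar}.Nonempty)
    (hOs_cvx : Convex ℝ {z ∈ Ω | f z = fstar})
    (hOs_cpt : IsCompact {z ∈ Ω | f z = fstar})
    (G : ℝ) (hG : 0 < G)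
    (hGbnd : ∀ z ∈ Ω, ∀ g, IsSubgradAt f z g → ‖g‖ ≤ G)
    (κ : ℝ) (hκ : 0 < κ)
    (hEB : ∀ z ∈ Ω, Metric.infDist z {z ∈ Ω | f z = fstar} ≤ (f z - fstar) / κ)
    (ε : ℝ) (hε : 0 < ε)
    (ε₀ : ℝ) (hε₀ : 0 < ε₀) (hεε₀ : ε ≤ ε₀) (α : ℝ) (hα : 1 < α)
    (t : ℕ) (ht : α ^ 2 * G ^ 2 / κ ^ 2 ≤ (t : ℝ))
    (w : ℕ → EuclideanSpace ℝ (Fin d)) (hw0 : w 0 ∈ Ω)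
    (hinit : f (w 0) - fstar ≤ ε₀)
    (hRSG : IsRSGSeq f Ω G ε₀ α t w) :
    (∀ k : ℕ, f (w k) - fstar ≤ ε₀ / α ^ k) ∧
      f (w (⌈Real.logb α (ε₀ / ε)⌉.toNat)) - fstar ≤ ε := by
  obtain ⟨u, g, hu1, hstep, havg⟩ := hRSG
  set S := {z ∈ Ω | f z = fstar} with hSdef
  have htR : (0:ℝ) < (t:ℝ) := lt_of_lt_of_le (by positivity) ht
  have ht1 : 1 ≤ t := by exact_mod_cast Nat.one_le_iff_ne_zero.mpr (by
    intro h; rw [h] at htR; norm_num at htR)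
  have htne : (t:ℝ) ≠ 0 := ne_of_gt htR
  have hαpos : (0:ℝ) < α := lt_trans one_pos hα
  have main : ∀ k, f (w k) - fstar ≤ ε₀ / α ^ k ∧ w k ∈ Ω := by
    intro k
    induction k with
    | zero =>
      refine ⟨?_, hw0⟩
      simpa using hinit
    | succ k ih =>
      set K := k + 1 with hKdef
      set η : ℝ := ε₀ / (α ^ K * G ^ 2) with hηdef
      have hηpos : 0 < η := by positivity
      obtain ⟨z, hzS, hdist⟩ := hOs_cpt.exists_infDist_eq_dist hOs_ne (w k)
      have hzΩ : z ∈ Ω := hzS.1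
      have hfz : f z = fstar := hzS.2
      have hu1k : u K 1 = w k := by
        have := hu1 K (by omega); simpa [hKdef] using this
      have hu1Ω : u K 1 ∈ Ω := by rw [hu1k]; exact ih.2
      have hstepK : ∀ i, 1 ≤ i → i ≤ t → IsSubgradAt f (u K i) (g K i) ∧
          u K (i+1) ∈ Ω ∧ ∀ zz ∈ Ω, ‖u K (i+1) - (u K i - η • g K i)‖
            ≤ ‖zz - (u K i - η • g K i)‖ := by
        intro i hi1 hit
        exact hstep K (by omega) i hi1 hit
      have hsb := stage_bound hΩcvx hηpos (u K) (g K) hu1Ω hstepK hGbnd hzΩ t le_rfl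
      set D : ℝ := ‖w k - z‖ with hDdef
      have hSig : 2*η*(∑ i ∈ Finset.Icc 1 t, (f (u K i) - f z)) ≤ D^2 + t*(η^2*G^2) := by
        have h0 := sq_nonneg ‖u K (t+1) - z‖
        rw [hu1k] at hsb
        linarith
      -- membership of the iterates and of the average
      have humem : ∀ i ∈ Finset.Icc 1 t, u K i ∈ Ω := by
        intro i hi
        rw [Finset.mem_Icc] at hi
        rcases Nat.exists_eq_add_of_le hi.1 with ⟨j, rfl⟩
        rcases Nat.eq_zero_or_pos j with rfl | hj
        · exact hu1Ω
        · have := (hstepK j hj (by omega)).2.1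
          simpa [Nat.add_comm] using this
      have hwKform : w K = ∑ i ∈ Finset.Icc 1 t, (t:ℝ)⁻¹ • u K i := by
        rw [havg K (by omega), Finset.smul_sum]
      have hwsum : ∑ i ∈ Finset.Icc 1 t, (t:ℝ)⁻¹ = 1 := by
        rw [Finset.sum_const, Nat.card_Icc]
        simp
        field_simp
      have hwKΩ : w K ∈ Ω := by
        rw [hwKform]
        exact hΩcvx.sum_mem (fun i _ => by positivity) hwsum humem
      -- Jensen
      have hjen : f (w K) ≤ (t:ℝ)⁻¹ * ∑ i ∈ Finset.Icc 1 t, f (u K i) := by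
        have h1 := hf.map_sum_le (t := Finset.Icc 1 t) (w := fun _ => (t:ℝ)⁻¹)
          (p := u K) (fun i _ => by positivity) hwsum (fun i _ => Set.mem_univ _)
        rw [← hwKform] at h1
        calc f (w K) ≤ ∑ i ∈ Finset.Icc 1 t, (t:ℝ)⁻¹ • f (u K i) := h1
          _ = (t:ℝ)⁻¹ * ∑ i ∈ Finset.Icc 1 t, f (u K i) := by
            rw [Finset.mul_sum]; simp [smul_eq_mul]
      have hfs : ∑ i ∈ Finset.Icc 1 t, (f (u K i) - f z)
          = (∑ i ∈ Finset.Icc 1 t, f (u K i)) - t * fstar := by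
        rw [Finset.sum_sub_distrib, hfz, Finset.sum_const, Nat.card_Icc]
        simp
      have hstep1 : f (w K) - fstar ≤ (t:ℝ)⁻¹ * ∑ i ∈ Finset.Icc 1 t, (f (u K i) - f z) := by
        rw [hfs, mul_sub, ← mul_assoc, inv_mul_cancel₀ htne, one_mul]
        linarith
      have hfin : 2*η*((t:ℝ)*(f (w K) - fstar)) ≤ D^2 + t*(η^2*G^2) := by
        have h2 : (t:ℝ)*(f (w K) - fstar) ≤ ∑ i ∈ Finset.Icc 1 t, (f (u K i) - f z) := by
          have h3 := mul_le_mul_of_nonneg_left hstep1 htR.le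
          rwa [← mul_assoc, mul_inv_cancel₀ htne, one_mul] at h3
        have h4 := mul_le_mul_of_nonneg_left h2 (by positivity : (0:ℝ) ≤ 2*η)
        linarith
      -- error bound on distance
      have hDle : D ≤ ε₀ / (α ^ k * κ) := by
        have h5 : Metric.infDist (w k) S ≤ (f (w k) - fstar)/κ := hEB (w k) ih.2
        rw [hdist, dist_eq_norm] at h5
        have h6 : (f (w k) - fstar)/κ ≤ (ε₀ / α ^ k)/κ := by
          gcongr
          exact ih.1
        calc D ≤ (ε₀ / α ^ k)/κ := le_trans h5 h6
          _ = ε₀ / (α ^ k * κ) := by rw [div_div]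
      have hD0 : 0 ≤ D := norm_nonneg _
      -- final arithmetic
      set A : ℝ := α ^ k with hAdef
      have hApos : 0 < A := by positivity
      have hBval : α ^ K = α * A := by rw [hKdef, pow_succ, ← hAdef]; ring
      have hDκ : D * (A * κ) ≤ ε₀ := by
        rw [div_eq_mul_inv] at hDle
        calc D * (A * κ) ≤ (ε₀ * (A*κ)⁻¹) * (A * κ) :=
          mul_le_mul_of_nonneg_right hDle (by positivity)
          _ = ε₀ := by field_simp
      have htκ : α^2 * G^2 ≤ t * κ^2 := by
        rw [div_le_iff₀ (by positivity)] at ht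
        linarith
      refine ⟨?_, hwKΩ⟩
      rw [hηdef, hBval] at hfin
      rw [hBval]
      exact rsg_arith hε₀ hαpos hApos hG hκ hD0 htR hfin hDκ htκ
  refine ⟨fun k => (main k).1, ?_⟩
  set K₀ := (⌈Real.logb α (ε₀ / ε)⌉).toNat with hK0
  have hratio : (0:ℝ) < ε₀ / ε := by positivity
  have hlogle : Real.logb α (ε₀ / ε) ≤ (K₀ : ℝ) := by
    calc Real.logb α (ε₀ / ε) ≤ (⌈Real.logb α (ε₀ / ε)⌉ : ℝ) := Int.le_ceil _
      _ ≤ ((K₀ : ℤ) : ℝ) := by exact_mod_cast Int.self_le_toNat _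
      _ = (K₀ : ℝ) := by push_cast; rfl
  have hαK : ε₀ / ε ≤ α ^ K₀ := by
    calc ε₀ / ε = α ^ Real.logb α (ε₀ / ε) :=
          (Real.rpow_logb (lt_trans one_pos hα) (ne_of_gt hα) hratio).symm
      _ ≤ α ^ (K₀ : ℝ) := Real.rpow_le_rpow_of_exponent_le hα.le hlogle
      _ = α ^ K₀ := by rw [Real.rpow_natCast]
  have hfinal : ε₀ / α ^ K₀ ≤ ε := by
    rw [div_le_iff₀ (by positivity)]
    rw [div_le_iff₀ hε] at hαK
    linarith
  exact le_trans (main K₀).1 hfinal
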